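/- arXiv:2602.07946 — 2 statements merged into one kernel-verified Lean document; each statement's English description precedes it below -/
import Mathlib

section
/- Let C = ⊕_{n≥0} C(n) be an ℕ₀-graded coalgebra, X = ⊕_{n≥0} X(n) an ℕ₀-graded left C-comodule with structure map δ : X → C ⊗ X, and Y ⊆ X a C-subcomodule (not necessarily graded). Fix an integer k > 0. Assume that for all n ≥ k the component map δ_{n−k,k} : X(n) → C(n−k) ⊗ X(k) (the composition of δ restricted to X(n) with the projection onto C(n−k)⊗X(k)) is injective, and that Y is not contained in ⊕_{i=0}^{k−1} X(i). Then Y ∩ ⊕_{i=0}^{k} X(i) ≠ 0. -/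
/-!
Take `y ∈ Y` outside `⊕_{i<k} X(i)` and let `n ≥ k` be its top degree. The `(n-k, k)`-component
of `δ y` only sees the top component `y_n`, so it is nonzero by injectivity of `δ_{n-k,k}`; pick
a functional `f` on `C(n-k)` that does not kill it. Slicing `δ y` with `f` composed with the
projection onto `C(n-k)` gives an element of `Y` (subcomodule) whose degrees are all `≤ k`
(since `y` lives in degrees `≤ n`) and whose degree-`k` component is the slice of that nonzero
component by `f`, hence nonzero.
-/

open TensorProduct LinearMap

namespace DirectSum

variable {ι R M : Type*} [DecidableEq ι] [CommRing R] [AddCommGroup M] [Module R M]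
  (ℳ : ι → Submodule R M) [Decomposition ℳ]

def projLinear (i : ι) : M →ₗ[R] ℳ i :=
  component R ι (fun i ↦ ℳ i) i ∘ₗ (decomposeLinearEquiv ℳ).toLinearMap

@[simp]
theorem projLinear_apply (i : ι) (x : M) : projLinear ℳ i x = decompose ℳ x i := rfl

theorem projLinear_comp_subtype_self (i : ι) : projLinear ℳ i ∘ₗ (ℳ i).subtype = .id := by
  ext x
  simp

theorem projLinear_comp_subtype_of_ne {i j : ι} (h : i ≠ j) :
    projLinear ℳ j ∘ₗ (ℳ i).subtype = 0 := by
  ext x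
  simp [of_eq_of_ne _ _ _ h.symm]

theorem exists_decompose_ne_zero_and_mem_iSup_le (ℳ : ℕ → Submodule R M) [Decomposition ℳ]
    {y : M} (hy : y ≠ 0) : ∃ n, decompose ℳ y n ≠ 0 ∧ y ∈ ⨆ (i) (_ : i ≤ n), ℳ i := by
  classical
  have hs : (decompose ℳ y).support.Nonempty := by
    rw [Finset.nonempty_iff_ne_empty, Ne, DFinsupp.support_eq_empty, ← decompose_zero ℳ]
    exact fun h ↦ hy ((decompose ℳ).injective h)
  obtain ⟨n, hn, hle⟩ := Finset.exists_max_image _ id hs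
  refine ⟨n, DFinsupp.mem_support_iff.mp hn, ?_⟩
  rw [← sum_support_decompose ℳ y]
  exact Submodule.sum_mem _ fun i hi ↦ Submodule.mem_iSup_of_mem i <|
    Submodule.mem_iSup_of_mem (hle i hi) (decompose ℳ y i).2

end DirectSum

open DirectSum (Decomposition decompose projLinear projLinear_comp_subtype_self
  projLinear_comp_subtype_of_ne)

theorem Submodule.mem_iSup_ne_of_map_eq_zero {ι R M N : Type*} [CommRing R]
    [AddCommGroup M] [Module R M] [AddCommGroup N] [Module R N]
    (S : ι → Submodule R M) (f : M →ₗ[R] N) (i₀ : ι) (h_ne : ∀ i ≠ i₀, S i ≤ ker f)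
    (h_self : Disjoint (S i₀) (ker f)) {t : M} (ht : t ∈ ⨆ i, S i) (hft : f t = 0) :
    t ∈ ⨆ (i) (_ : i ≠ i₀), S i := by
  rw [iSup_split_single S i₀] at ht
  obtain ⟨r, hr, s, hs, rfl⟩ := Submodule.mem_sup.mp ht
  have hfs : f s = 0 := (iSup₂_le h_ne : _ ≤ ker f) hs
  rw [map_add, hfs, add_zero] at hft
  rwa [Submodule.disjoint_def.mp h_self r hr hft, zero_add]

section Slice

variable {R C X : Type*} [CommRing R] [AddCommGroup C] [Module R C] [AddCommGroup X] [Module R X]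

/-- On a left comodule, `leftSlice f ∘ δ` is the action `x ↦ f ⇀ x` of the dual algebra. -/
def leftSlice (g : Module.Dual R C) : C ⊗[R] X →ₗ[R] X :=
  TensorProduct.lid R X ∘ₗ g.rTensor X

@[simp]
theorem leftSlice_tmul (g : Module.Dual R C) (c : C) (x : X) :
    leftSlice g (c ⊗ₜ[R] x) = g c • x := by
  simp [leftSlice]

@[simp]
theorem leftSlice_zero : leftSlice (0 : Module.Dual R C) = (0 : C ⊗[R] X →ₗ[R] X) := by
  simp [leftSlice]

theorem leftSlice_comp_map {C' X' : Type*} [AddCommGroup C'] [Module R C'] [AddCommGroup X']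
    [Module R X'] (g : Module.Dual R C) (φ : C' →ₗ[R] C) (ψ : X' →ₗ[R] X) :
    leftSlice g ∘ₗ map φ ψ = ψ ∘ₗ leftSlice (g ∘ₗ φ) :=
  TensorProduct.ext' fun c x ↦ by simp

theorem leftSlice_mem_of_mem_range_map {C' : Type*} [AddCommGroup C'] [Module R C']
    (g : Module.Dual R C) (φ : C' →ₗ[R] C) {N : Submodule R X} {t : C ⊗[R] X}
    (ht : t ∈ range (map φ N.subtype)) : leftSlice g t ∈ N := by
  obtain ⟨u, rfl⟩ := ht
  rw [← comp_apply, leftSlice_comp_map]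
  exact (leftSlice _ u).2

theorem exists_leftSlice_ne_zero [Module.Free R C] {w : C ⊗[R] X} (hw : w ≠ 0) :
    ∃ f : Module.Dual R C, leftSlice f w ≠ 0 := by
  let b := Module.Free.chooseBasis R C
  obtain ⟨i, hi⟩ := Finsupp.ne_iff.mp ((equivFinsuppOfBasisLeft b).map_ne_zero_iff.mpr hw)
  exact ⟨b.coord i, by rwa [equivFinsuppOfBasisLeft_apply] at hi⟩

end Slice

section GradedTensor

variable {ι κ R C X : Type*} [CommRing R] [AddCommGroup C] [Module R C] [AddCommGroup X]
  [Module R X] (𝒞 : ι → Submodule R C) (𝒳 : κ → Submodule R X)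

abbrev tensorComponent (pq : ι × κ) : Submodule R (C ⊗[R] X) :=
  range (map (𝒞 pq.1).subtype (𝒳 pq.2).subtype)

variable [DecidableEq ι] [DecidableEq κ] [Decomposition 𝒞] [Decomposition 𝒳]

def tensorProj (p : ι) (q : κ) : C ⊗[R] X →ₗ[R] 𝒞 p ⊗[R] 𝒳 q :=
  map (projLinear 𝒞 p) (projLinear 𝒳 q)

theorem tensorProj_comp_map_subtype (p : ι) (q : κ) :
    tensorProj 𝒞 𝒳 p q ∘ₗ map (𝒞 p).subtype (𝒳 q).subtype = .id := by
  rw [tensorProj, ← map_comp, projLinear_comp_subtype_self, projLinear_comp_subtype_self, map_id]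

theorem tensorComponent_le_ker_tensorProj {p : ι} {q : κ} {pq : ι × κ} (h : pq ≠ (p, q)) :
    tensorComponent 𝒞 𝒳 pq ≤ ker (tensorProj 𝒞 𝒳 p q) := by
  obtain ⟨a, b⟩ := pq
  rw [range_le_ker_iff, tensorProj, ← map_comp]
  by_cases ha : a = p
  · subst ha
    rw [projLinear_comp_subtype_of_ne 𝒳 fun hb ↦ h (congrArg _ hb), map_zero_right]
  · rw [projLinear_comp_subtype_of_ne 𝒞 ha, map_zero_left]

theorem disjoint_tensorComponent_ker_tensorProj (p : ι) (q : κ) :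
    Disjoint (tensorComponent 𝒞 𝒳 (p, q)) (ker (tensorProj 𝒞 𝒳 p q)) := by
  rw [Submodule.disjoint_def]
  rintro _ ⟨u, rfl⟩ hu
  rw [mem_ker, ← comp_apply, tensorProj_comp_map_subtype, id_apply] at hu
  rw [hu, map_zero]

theorem projLinear_leftSlice {p : ι} {q : κ} (f : Module.Dual R (𝒞 p)) (t : C ⊗[R] X) :
    projLinear 𝒳 q (leftSlice (f ∘ₗ projLinear 𝒞 p) t) = leftSlice f (tensorProj 𝒞 𝒳 p q t) := by
  rw [← comp_apply, ← comp_apply (leftSlice f)]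
  congr 1
  exact TensorProduct.ext' fun c x ↦ by simp [tensorProj]

end GradedTensor

section RespectsGrading

variable {R C X : Type*} [CommRing R] [AddCommGroup C] [Module R C] [AddCommGroup X]
  [Module R X] {𝒞 : ℕ → Submodule R C} {𝒳 : ℕ → Submodule R X}

variable (𝒞 𝒳) in
def RespectsGrading (δ : X →ₗ[R] C ⊗[R] X) : Prop :=
  ∀ n, ∀ x ∈ 𝒳 n, δ x ∈ ⨆ (pq : ℕ × ℕ) (_ : pq.1 + pq.2 = n), tensorComponent 𝒞 𝒳 pq

variable {δ : X →ₗ[R] C ⊗[R] X} [Decomposition 𝒞]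

theorem RespectsGrading.leftSlice_mem (hδ : RespectsGrading 𝒞 𝒳 δ) {p i : ℕ}
    (f : Module.Dual R (𝒞 p)) {x : X} (hx : x ∈ 𝒳 i) :
    leftSlice (f ∘ₗ projLinear 𝒞 p) (δ x) ∈ ⨆ (b) (_ : p + b = i), 𝒳 b := by
  refine Submodule.mem_comap.mp ((iSup₂_le fun ⟨a, b⟩ hab ↦ ?_ :
    _ ≤ Submodule.comap (leftSlice (f ∘ₗ projLinear 𝒞 p)) _) (hδ i x hx))
  rintro _ ⟨u, rfl⟩
  rw [Submodule.mem_comap, ← comp_apply, leftSlice_comp_map, comp_assoc]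
  by_cases ha : a = p
  · subst ha
    exact Submodule.mem_iSup_of_mem b (Submodule.mem_iSup_of_mem hab (Subtype.prop _))
  · rw [projLinear_comp_subtype_of_ne 𝒞 ha, comp_zero, leftSlice_zero, comp_zero,
      LinearMap.zero_apply]
    exact zero_mem _

theorem RespectsGrading.leftSlice_mem_iSup_le (hδ : RespectsGrading 𝒞 𝒳 δ) {p q n : ℕ}
    (h : p + q = n) (f : Module.Dual R (𝒞 p)) {y : X} (hy : y ∈ ⨆ (i) (_ : i ≤ n), 𝒳 i) :
    leftSlice (f ∘ₗ projLinear 𝒞 p) (δ y) ∈ ⨆ (b) (_ : b ≤ q), 𝒳 b := by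
  refine Submodule.mem_comap.mp ((iSup₂_le fun i hi x hx ↦ ?_ :
    _ ≤ Submodule.comap (leftSlice (f ∘ₗ projLinear 𝒞 p) ∘ₗ δ) _) hy)
  exact (iSup₂_mono' fun b hb ↦ ⟨b, by omega, le_rfl⟩ : _ ≤ ⨆ (b) (_ : b ≤ q), 𝒳 b)
    (hδ.leftSlice_mem f hx)

variable [Decomposition 𝒳]

theorem RespectsGrading.tensorProj_eq_zero (hδ : RespectsGrading 𝒞 𝒳 δ) {p q i : ℕ}
    (h : p + q ≠ i) {x : X} (hx : x ∈ 𝒳 i) : tensorProj 𝒞 𝒳 p q (δ x) = 0 :=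
  (iSup₂_le fun _ hpq ↦ tensorComponent_le_ker_tensorProj 𝒞 𝒳 (by rintro rfl; exact h hpq) :
    _ ≤ ker (tensorProj 𝒞 𝒳 p q)) (hδ i x hx)

theorem RespectsGrading.tensorProj_eq_tensorProj_decompose (hδ : RespectsGrading 𝒞 𝒳 δ)
    {p q n : ℕ} (h : p + q = n) (y : X) :
    tensorProj 𝒞 𝒳 p q (δ y) = tensorProj 𝒞 𝒳 p q (δ (decompose 𝒳 y n)) := by
  suffices tensorProj 𝒞 𝒳 p q ∘ₗ δ = tensorProj 𝒞 𝒳 p q ∘ₗ δ ∘ₗ (𝒳 n).subtype ∘ₗ projLinear 𝒳 n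
    from congr($this y)
  refine DirectSum.decompose_lhom_ext 𝒳 fun i ↦ ?_
  by_cases hi : i = n
  · subst hi
    simp only [comp_assoc, projLinear_comp_subtype_self, comp_id]
  · ext ⟨x, hx⟩
    simp [hδ.tensorProj_eq_zero (h ▸ Ne.symm hi) hx, DirectSum.decompose_of_mem_ne 𝒳 hx hi]

theorem RespectsGrading.mem_iSup_ne_of_tensorProj_eq_zero (hδ : RespectsGrading 𝒞 𝒳 δ)
    {p q n : ℕ} {x : X} (hx : x ∈ 𝒳 n) (h0 : tensorProj 𝒞 𝒳 p q (δ x) = 0) :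
    δ x ∈ ⨆ (pq : ℕ × ℕ) (_ : pq ≠ (p, q)), tensorComponent 𝒞 𝒳 pq :=
  Submodule.mem_iSup_ne_of_map_eq_zero _ _ (p, q)
    (fun _ ↦ tensorComponent_le_ker_tensorProj 𝒞 𝒳)
    (disjoint_tensorComponent_ker_tensorProj 𝒞 𝒳 p q)
    ((iSup_mono fun _ ↦ iSup_const_le : _ ≤ ⨆ pq, tensorComponent 𝒞 𝒳 pq) (hδ n x hx)) h0

end RespectsGrading

theorem graded_subcomodule_meets_low_degrees_general
    (k C X : Type*) [Field k]
    [AddCommGroup C] [Module k C]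
    [AddCommGroup X] [Module k X]
    (𝒞 : ℕ → Submodule k C) (𝒳 : ℕ → Submodule k X)
    (hCint : DirectSum.IsInternal 𝒞) (hXint : DirectSum.IsInternal 𝒳)
    -- the comodule is graded
    (δ : X →ₗ[k] C ⊗[k] X)
    (hδgr : ∀ n : ℕ, ∀ x ∈ 𝒳 n, δ x ∈
      ⨆ (pq : ℕ × ℕ) (_ : pq.1 + pq.2 = n),
        LinearMap.range (TensorProduct.map (𝒞 pq.1).subtype (𝒳 pq.2).subtype))
    -- Y is a subcomodule: δ(Y) ⊆ C ⊗ Y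
    (Y : Submodule k X)
    (hY : ∀ y ∈ Y, δ y ∈
      LinearMap.range (TensorProduct.map (LinearMap.id : C →ₗ[k] C) Y.subtype))
    (k₀ : ℕ)
    -- injectivity of the component maps δ_{n-k,k} on X(n): if the
    -- (n-k₀, k₀)-component of δ(x) vanishes, then x = 0
    (hinj : ∀ n : ℕ, k₀ ≤ n → ∀ x ∈ 𝒳 n,
      δ x ∈ (⨆ (pq : ℕ × ℕ) (_ : pq ≠ (n - k₀, k₀)),
        LinearMap.range (TensorProduct.map (𝒞 pq.1).subtype (𝒳 pq.2).subtype)) →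
      x = 0)
    (hYnot : ¬ Y ≤ ⨆ (i : ℕ) (_ : i < k₀), 𝒳 i) :
    Y ⊓ (⨆ (i : ℕ) (_ : i ≤ k₀), 𝒳 i) ≠ ⊥ := by
  let := hCint.chooseDecomposition
  let := hXint.chooseDecomposition
  have hδ : RespectsGrading 𝒞 𝒳 δ := hδgr
  obtain ⟨y, hyY, hy_low⟩ := SetLike.not_le_iff_exists.mp hYnot
  obtain ⟨n, hyn, hy_le⟩ := DirectSum.exists_decompose_ne_zero_and_mem_iSup_le 𝒳
    (y := y) (by rintro rfl; exact hy_low (zero_mem _))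
  have hkn : k₀ ≤ n := by
    by_contra! h
    exact hy_low ((iSup₂_mono' fun i hi ↦ ⟨i, by omega, le_rfl⟩ :
      ⨆ (i) (_ : i ≤ n), 𝒳 i ≤ _) hy_le)
  have hsum : n - k₀ + k₀ = n := Nat.sub_add_cancel hkn
  have hw : tensorProj 𝒞 𝒳 (n - k₀) k₀ (δ y) ≠ 0 := by
    rw [hδ.tensorProj_eq_tensorProj_decompose hsum]
    exact fun h0 ↦ hyn <| Subtype.ext <|
      hinj n hkn _ (Subtype.prop _) (hδ.mem_iSup_ne_of_tensorProj_eq_zero (Subtype.prop _) h0)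
  obtain ⟨f, hf⟩ := exists_leftSlice_ne_zero hw
  refine (Submodule.ne_bot_iff _).mpr
    ⟨leftSlice (f ∘ₗ projLinear 𝒞 (n - k₀)) (δ y), ⟨?_, ?_⟩, fun h0 ↦ hf ?_⟩
  · exact leftSlice_mem_of_mem_range_map _ _ (hY y hyY)
  · exact hδ.leftSlice_mem_iSup_le hsum f hy_le
  · rw [← projLinear_leftSlice, h0, map_zero]

/-- (cf. Heckenberger–Schneider, Proposition 13.2.3.) Let `C` be an
`ℕ₀`-graded coalgebra, `X` an `ℕ₀`-graded left `C`-comodule with structure map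
`δ`, and `Y ⊆ X` a subcomodule. Fix `k > 0`. If the component maps
`δ_{n-k,k} : X(n) → C(n-k) ⊗ X(k)` are injective for all `n ≥ k` and `Y` is
not contained in `⊕_{i<k} X(i)`, then `Y ∩ ⊕_{i≤k} X(i) ≠ 0`. -/
theorem graded_subcomodule_meets_low_degrees
    (k C X : Type*) [Field k]
    [AddCommGroup C] [Module k C] [Coalgebra k C]
    [AddCommGroup X] [Module k X]
    (𝒞 : ℕ → Submodule k C) (𝒳 : ℕ → Submodule k X)
    (hCint : DirectSum.IsInternal 𝒞) (hXint : DirectSum.IsInternal 𝒳)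
    -- the coalgebra is graded
    (hcomul : ∀ n : ℕ, ∀ c ∈ 𝒞 n, (Coalgebra.comul (R := k) c : C ⊗[k] C) ∈
      ⨆ (pq : ℕ × ℕ) (_ : pq.1 + pq.2 = n),
        LinearMap.range (TensorProduct.map (𝒞 pq.1).subtype (𝒞 pq.2).subtype))
    -- the comodule is graded
    (δ : X →ₗ[k] C ⊗[k] X)
    (hδgr : ∀ n : ℕ, ∀ x ∈ 𝒳 n, δ x ∈
      ⨆ (pq : ℕ × ℕ) (_ : pq.1 + pq.2 = n),
        LinearMap.range (TensorProduct.map (𝒞 pq.1).subtype (𝒳 pq.2).subtype))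
    -- Y is a subcomodule: δ(Y) ⊆ C ⊗ Y
    (Y : Submodule k X)
    (hY : ∀ y ∈ Y, δ y ∈
      LinearMap.range (TensorProduct.map (LinearMap.id : C →ₗ[k] C) Y.subtype))
    (k₀ : ℕ) (hk₀ : 0 < k₀)
    -- injectivity of the component maps δ_{n-k,k} on X(n): if the
    -- (n-k₀, k₀)-component of δ(x) vanishes, then x = 0
    (hinj : ∀ n : ℕ, k₀ ≤ n → ∀ x ∈ 𝒳 n,
      δ x ∈ (⨆ (pq : ℕ × ℕ) (_ : pq ≠ (n - k₀, k₀)),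
        LinearMap.range (TensorProduct.map (𝒞 pq.1).subtype (𝒳 pq.2).subtype)) →
      x = 0)
    (hYnot : ¬ Y ≤ ⨆ (i : ℕ) (_ : i < k₀), 𝒳 i) :
    Y ⊓ (⨆ (i : ℕ) (_ : i ≤ k₀), 𝒳 i) ≠ ⊥ :=
  graded_subcomodule_meets_low_degrees_general k C X 𝒞 𝒳 hCint hXint δ hδgr Y hY k₀ hinj hYnot
end

section
/- Let C be a coalgebra over a field k equipped with an ℕ₀-filtration {C_n}_{n≥0} (an increasing family of subspaces with union C such that Δ(C_n) ⊆ Σ_{i=0}^n C_i ⊗ C_{n−i}). Let U be a nonzero left C-comodule. Then there exists a nonzero u ∈ U with δ(u) ∈ C₀ ⊗ U. -/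
/-!
Pick `u ≠ 0` and let `n` be least with `δ u ∈ C_n ⊗ U`; if `n = 0` we are done. Otherwise
`δ u ∉ C_{n-1} ⊗ U`, so some functional `f` vanishing on `C_{n-1}` gives
`v := f(u₍₋₁₎) u₍₀₎ ≠ 0`. By coassociativity `δ v = f(u₍₋₁₎₍₁₎) u₍₋₁₎₍₂₎ ⊗ u₍₀₎`, and as
`Δ(C_n) ⊆ Σ C_i ⊗ C_{n-i}` with `f` killing every `C_i`, `i < n`, only the summand
`C_n ⊗ C_0` survives: `δ v ∈ C_0 ⊗ U`.
-/

open TensorProduct LinearMap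

section CommSemiring

variable {R M N P : Type*} [CommSemiring R] [AddCommMonoid M] [Module R M]
  [AddCommMonoid N] [Module R N] [AddCommMonoid P] [Module R P]

theorem rTensor_mem_range_rTensor_subtype {φ : M →ₗ[R] N} {W : Submodule R M}
    {W' : Submodule R N} (h : ∀ x ∈ W, φ x ∈ W') {y : M ⊗[R] P}
    (hy : y ∈ range (W.subtype.rTensor P)) :
    φ.rTensor P y ∈ range (W'.subtype.rTensor P) := by
  obtain ⟨z, rfl⟩ := hy
  refine ⟨(φ.restrict h).rTensor P z, ?_⟩
  rw [← rTensor_comp_apply, ← rTensor_comp_apply, subtype_comp_restrict]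
  rfl

theorem range_rTensor_subtype_mono {W W' : Submodule R M} (h : W ≤ W') :
    range (W.subtype.rTensor P) ≤ range (W'.subtype.rTensor P) := fun _ hy ↦ by
  simpa using rTensor_mem_range_rTensor_subtype (φ := .id) (fun _ hx ↦ h hx) hy

theorem exists_mem_range_rTensor_subtype {ι : Type*} [Nonempty ι] {W : ι → Submodule R M}
    (hW : Directed (· ≤ ·) W) (htop : ⨆ i, W i = ⊤) (x : M ⊗[R] P) :
    ∃ i, x ∈ range ((W i).subtype.rTensor P) := by
  have hdir : Directed (· ≤ ·) fun i ↦ range ((W i).subtype.rTensor P) :=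
    fun i j ↦
      let ⟨l, hil, hjl⟩ := hW i j
      ⟨l, range_rTensor_subtype_mono hil, range_rTensor_subtype_mono hjl⟩
  rw [← Submodule.mem_iSup_of_directed _ hdir]
  induction x using TensorProduct.induction_on with
  | zero => exact zero_mem _
  | add x y hx hy => exact add_mem hx hy
  | tmul m p =>
    obtain ⟨i, hi⟩ := (Submodule.mem_iSup_of_directed _ hW).mp (htop ▸ Submodule.mem_top (x := m))
    exact Submodule.mem_iSup_of_mem i ⟨⟨m, hi⟩ ⊗ₜ p, rfl⟩

theorem lid_rTensor_map_subtype_mem (f : Module.Dual R M) (A : Submodule R M)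
    (B : Submodule R N) (w : A ⊗[R] B) :
    TensorProduct.lid R N (f.rTensor N (map A.subtype B.subtype w)) ∈ B := by
  induction w using TensorProduct.induction_on with
  | zero => simp
  | add x y hx hy => simpa using add_mem hx hy
  | tmul a b => simpa using B.smul_mem (f a) b.2

theorem lid_rTensor_map_subtype_eq_zero {f : Module.Dual R M} {A : Submodule R M}
    (hf : ∀ a ∈ A, f a = 0) (B : Submodule R N) (w : A ⊗[R] B) :
    TensorProduct.lid R N (f.rTensor N (map A.subtype B.subtype w)) = 0 := by
  induction w using TensorProduct.induction_on with
  | zero => simp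
  | add x y hx hy => simp_all
  | tmul a b => simp [hf a a.2]

theorem lid_rTensor_mem_of_mem_iSup_range_map_subtype {W : ℕ → Submodule R M}
    (hW : Monotone W) {m : ℕ} {f : Module.Dual R M} (hf : ∀ a ∈ W m, f a = 0)
    {x : M ⊗[R] M}
    (hx : x ∈ ⨆ (i : ℕ) (_ : i ≤ m + 1), range (map (W i).subtype (W (m + 1 - i)).subtype)) :
    TensorProduct.lid R M (f.rTensor M x) ∈ W 0 := by
  suffices h : (⨆ (i : ℕ) (_ : i ≤ m + 1), range (map (W i).subtype (W (m + 1 - i)).subtype)) ≤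
      (W 0).comap ((TensorProduct.lid R M).toLinearMap ∘ₗ f.rTensor M) from h hx
  refine iSup₂_le fun i hi ↦ ?_
  rintro _ ⟨w, rfl⟩
  rcases hi.lt_or_eq with hi | rfl
  · simp only [Submodule.mem_comap, coe_comp, LinearEquiv.coe_coe, Function.comp_apply,
      lid_rTensor_map_subtype_eq_zero (fun a ha ↦ hf a (hW (Nat.le_of_lt_succ hi) ha))]
    exact zero_mem _
  · simpa using lid_rTensor_map_subtype_mem f _ _ w

theorem comp_lid_rTensor_eq (f : Module.Dual R M) (δ : N →ₗ[R] M ⊗[R] N) :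
    δ ∘ₗ (TensorProduct.lid R N).toLinearMap ∘ₗ f.rTensor N =
      ((TensorProduct.lid R M).toLinearMap ∘ₗ f.rTensor M).rTensor N ∘ₗ
        (TensorProduct.assoc R M M N).symm.toLinearMap ∘ₗ δ.lTensor M := by
  refine TensorProduct.ext' fun m n ↦ ?_
  simp only [coe_comp, LinearEquiv.coe_coe, Function.comp_apply, rTensor_tmul, lid_tmul, map_smul,
    lTensor_tmul]
  induction δ n using TensorProduct.induction_on with
  | zero => simp
  | add x y hx hy => simp_all [tmul_add, smul_add]
  | tmul m' n' => simp [smul_tmul']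

theorem lid_rTensor_coaction_eq [CoalgebraStruct R M] {δ : N →ₗ[R] M ⊗[R] N}
    (hcoassoc : ∀ n, CoalgebraStruct.comul.rTensor N (δ n) =
      (TensorProduct.assoc R M M N).symm (δ.lTensor M (δ n)))
    (f : Module.Dual R M) (n : N) :
    δ (TensorProduct.lid R N (f.rTensor N (δ n))) =
      ((TensorProduct.lid R M).toLinearMap ∘ₗ f.rTensor M ∘ₗ CoalgebraStruct.comul).rTensor N
        (δ n) := by
  rw [← comp_assoc, rTensor_comp_apply, hcoassoc]
  exact LinearMap.congr_fun (comp_lid_rTensor_eq f δ) (δ n)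

end CommSemiring

section CommRing

variable {R M N : Type*} [CommRing R] [AddCommGroup M] [Module R M] [AddCommGroup N] [Module R N]

theorem exists_dual_rTensor_ne_zero [Module.Free R M] {x : M ⊗[R] N} (hx : x ≠ 0) :
    ∃ g : Module.Dual R M, g.rTensor N x ≠ 0 := by
  classical
  let b := Module.Free.chooseBasis R M
  obtain ⟨i, hi⟩ : ∃ i, equivFinsuppOfBasisLeft b x i ≠ 0 := by
    by_contra! h
    exact hx ((equivFinsuppOfBasisLeft b).map_eq_zero_iff.mp (Finsupp.ext h))
  rw [equivFinsuppOfBasisLeft_apply] at hi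
  exact ⟨b.coord i, fun h ↦ hi (by rw [h, map_zero])⟩

theorem exists_dual_vanishing_rTensor_ne_zero {W : Submodule R M} [Module.Free R (M ⧸ W)]
    {x : M ⊗[R] N} (hx : x ∉ range (W.subtype.rTensor N)) :
    ∃ f : Module.Dual R M, (∀ w ∈ W, f w = 0) ∧ f.rTensor N x ≠ 0 := by
  have hq : W.mkQ.rTensor N x ≠ 0 := fun h ↦ hx <| by
    rw [← (rTensor_exact N (exact_subtype_mkQ W) W.mkQ_surjective).linearMap_ker_eq]
    exact h
  obtain ⟨g, hg⟩ := exists_dual_rTensor_ne_zero hq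
  refine ⟨g ∘ₗ W.mkQ, fun w hw ↦ ?_, by rwa [rTensor_comp_apply]⟩
  simp [(Submodule.Quotient.mk_eq_zero W).mpr hw]

end CommRing

theorem exists_ne_zero_coaction_mem_zero_of_mem_succ {k C U : Type*} [Field k]
    [AddCommGroup C] [Module k C] [CoalgebraStruct k C] [AddCommGroup U] [Module k U]
    {Cfil : ℕ → Submodule k C} (hmono : Monotone Cfil) {m : ℕ}
    (hΔ : ∀ c ∈ Cfil (m + 1), CoalgebraStruct.comul (R := k) c ∈
      ⨆ (i : ℕ) (_ : i ≤ m + 1), range (map (Cfil i).subtype (Cfil (m + 1 - i)).subtype))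
    {δ : U →ₗ[k] C ⊗[k] U}
    (hcoassoc : ∀ u, CoalgebraStruct.comul.rTensor U (δ u) =
      (TensorProduct.assoc k C C U).symm (δ.lTensor C (δ u)))
    {u : U} (hsucc : δ u ∈ range ((Cfil (m + 1)).subtype.rTensor U))
    (hm : δ u ∉ range ((Cfil m).subtype.rTensor U)) :
    ∃ v : U, v ≠ 0 ∧ δ v ∈ range ((Cfil 0).subtype.rTensor U) := by
  obtain ⟨f, hf, hfu⟩ := exists_dual_vanishing_rTensor_ne_zero hm
  refine ⟨TensorProduct.lid k U (f.rTensor U (δ u)), (LinearEquiv.map_ne_zero_iff _).mpr hfu, ?_⟩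
  rw [lid_rTensor_coaction_eq hcoassoc]
  exact rTensor_mem_range_rTensor_subtype
    (fun c hc ↦ lid_rTensor_mem_of_mem_iSup_range_map_subtype hmono hf (hΔ c hc)) hsucc

theorem filtered_coalgebra_comodule_exists_low_general
    (k C U : Type*) [Field k]
    [AddCommGroup C] [Module k C] [Coalgebra k C]
    [AddCommGroup U] [Module k U] [Nontrivial U]
    (Cfil : ℕ → Submodule k C)
    (hmono : Monotone Cfil)
    (hunion : (⨆ n : ℕ, Cfil n) = ⊤)
    (hΔ : ∀ n : ℕ, ∀ c ∈ Cfil n, (Coalgebra.comul (R := k) c : C ⊗[k] C) ∈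
      ⨆ (i : ℕ) (_ : i ≤ n),
        LinearMap.range (TensorProduct.map (Cfil i).subtype (Cfil (n - i)).subtype))
    (δ : U →ₗ[k] C ⊗[k] U)
    -- coassociativity axiom for the comodule
    (hcoassoc : ∀ u : U,
      (TensorProduct.map (Coalgebra.comul (R := k)) (LinearMap.id : U →ₗ[k] U)) (δ u)
        = (TensorProduct.assoc k C C U).symm
            ((TensorProduct.map (LinearMap.id : C →ₗ[k] C) δ) (δ u))) :
    ∃ u : U, u ≠ 0 ∧ δ u ∈
      LinearMap.range (TensorProduct.map (Cfil 0).subtype (LinearMap.id : U →ₗ[k] U)) := by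
  classical
  obtain ⟨u, hu⟩ := exists_ne (0 : U)
  have hlevel : ∃ n, δ u ∈ range ((Cfil n).subtype.rTensor U) :=
    exists_mem_range_rTensor_subtype hmono.directed_le hunion (δ u)
  rcases hn : Nat.find hlevel with _ | m
  · exact ⟨u, hu, hn ▸ Nat.find_spec hlevel⟩
  · exact exists_ne_zero_coaction_mem_zero_of_mem_succ hmono (hΔ (m + 1)) hcoassoc
      (hn ▸ Nat.find_spec hlevel) (Nat.find_min hlevel (hn ▸ Nat.lt_succ_self m))

/-- Let `C` be a coalgebra with an `ℕ₀`-filtration `{C_n}` (increasing, with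
union `C`, and `Δ(C_n) ⊆ Σ_{i≤n} C_i ⊗ C_{n-i}`), and let `U` be a nonzero
left `C`-comodule. Then there exists a nonzero `u ∈ U` with `δ(u) ∈ C₀ ⊗ U`. -/
theorem filtered_coalgebra_comodule_exists_low
    (k C U : Type*) [Field k]
    [AddCommGroup C] [Module k C] [Coalgebra k C]
    [AddCommGroup U] [Module k U] [Nontrivial U]
    (Cfil : ℕ → Submodule k C)
    (hmono : Monotone Cfil)
    (hunion : (⨆ n : ℕ, Cfil n) = ⊤)
    (hΔ : ∀ n : ℕ, ∀ c ∈ Cfil n, (Coalgebra.comul (R := k) c : C ⊗[k] C) ∈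
      ⨆ (i : ℕ) (_ : i ≤ n),
        LinearMap.range (TensorProduct.map (Cfil i).subtype (Cfil (n - i)).subtype))
    (δ : U →ₗ[k] C ⊗[k] U)
    -- counit axiom for the comodule
    (hcounit : ∀ u : U,
      (TensorProduct.lid k U)
        ((TensorProduct.map (Coalgebra.counit (R := k)) (LinearMap.id : U →ₗ[k] U))
          (δ u)) = u)
    -- coassociativity axiom for the comodule
    (hcoassoc : ∀ u : U,
      (TensorProduct.map (Coalgebra.comul (R := k)) (LinearMap.id : U →ₗ[k] U)) (δ u)
        = (TensorProduct.assoc k C C U).symm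
            ((TensorProduct.map (LinearMap.id : C →ₗ[k] C) δ) (δ u))) :
    ∃ u : U, u ≠ 0 ∧ δ u ∈
      LinearMap.range (TensorProduct.map (Cfil 0).subtype (LinearMap.id : U →ₗ[k] U)) :=
  filtered_coalgebra_comodule_exists_low_general k C U Cfil hmono hunion hΔ δ hcoassoc
end
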